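/- arXiv:1008.3610 — 4 statements merged into one kernel-verified Lean document; each statement's English description precedes it below -/
import Mathlib

section
/- Let Γ be a countable group acting on a countably infinite set I, and let (X₀, μ₀) be a probability space with an atom (a point of positive measure) and with at least two points in its support. The generalized Bernoulli action Γ ↷ (X₀, μ₀)^I is essentially free if and only if every g ≠ e in Γ moves infinitely many elements of I. -/
/-!
By uniqueness on boxes, `μ` is `Measure.infinitePi (fun _ => μ₀)`. Singletons of `X₀` need not
be measurable, so all the sets below are measured by outer measure.

If `g` moves only a finite set `s`, its fixed-point set contains the cylinder `{x | x = a on s}`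
over an atom `a`. Since the coordinates in `s` are independent of those outside, the outer
measure of this cylinder is that of its base, `μ₀ {a} ^ |s| > 0`.

If `g` moves infinitely many points, pick `K` of them, `i₁, …, i_K`, such that the `2K`
points `iₖ, g⁻¹ • iₖ` are distinct. A fixed point agrees on each of these `K` independent
pairs, so the fixed-point set has measure at most `p ^ K`, where `p` is the outer probability
that two independent samples of `μ₀` coincide. With `E` a measurable hull of the atom,
`p ≤ 1 - μ₀ E * μ₀ Eᶜ < 1`.
-/

open MeasureTheory ProbabilityTheory

theorem MeasurableSpace.comap_restrict_eq_iSup_comap_eval {ι : Type*} {X : ι → Type*}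
    [∀ i, MeasurableSpace (X i)] (p : ι → Prop) :
    MeasurableSpace.pi.comap (fun (x : ∀ i, X i) (i : Subtype p) => x i) =
      ⨆ (i) (_ : p i), MeasurableSpace.comap (fun x : ∀ i, X i => x i) inferInstance := by
  rw [MeasurableSpace.pi, MeasurableSpace.comap_iSup, iSup_subtype']
  simp_rw [MeasurableSpace.comap_comp]
  rfl

theorem ProbabilityTheory.indepFun_restrict_restrict_not_infinitePi {ι : Type*}
    {X : ι → Type*} [∀ i, MeasurableSpace (X i)] (P : ∀ i, Measure (X i))
    [∀ i, IsProbabilityMeasure (P i)] (p : ι → Prop) :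
    IndepFun (fun (x : ∀ i, X i) (i : Subtype p) => x i) (fun x (i : {i // ¬p i}) => x i)
      (Measure.infinitePi P) := by
  rw [IndepFun_iff_Indep, MeasurableSpace.comap_restrict_eq_iSup_comap_eval,
    MeasurableSpace.comap_restrict_eq_iSup_comap_eval]
  exact indep_iSup_of_disjoint (fun i => (measurable_pi_apply i).comap_le)
    (iIndepFun_infinitePi (P := P) (X := fun _ => id) fun _ => measurable_id)
    (disjoint_compl_right (a := {i | p i}))

namespace MeasureTheory.Measure

theorem infinitePi_cylinder' {ι : Type*} {X : ι → Type*} [∀ i, MeasurableSpace (X i)]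
    (P : ∀ i, Measure (X i)) [∀ i, IsProbabilityMeasure (P i)] (s : Finset ι)
    (A : Set (∀ i : s, X i)) :
    infinitePi P (cylinder s A) = Measure.pi (fun i : s => P i) A := by
  classical
  let ψ := MeasurableEquiv.piEquivPiSubtypeProd X (· ∈ s)
  have hcyl : cylinder s A = ψ ⁻¹' (A ×ˢ Set.univ) := by
    rw [Set.prod_univ]
    rfl
  have hrest : Measurable fun (x : ∀ i, X i) (i : {i // i ∉ s}) => x i :=
    measurable_pi_lambda _ fun _ => measurable_pi_apply _
  have hψ : (infinitePi P).map ψ = (Measure.pi fun i : s => P i).prod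
      ((infinitePi P).map fun x (i : {i // i ∉ s}) => x i) := by
    rw [← infinitePi_map_restrict]
    exact (indepFun_restrict_restrict_not_infinitePi P (· ∈ s)).map_prod_eq_prod_map_map
      s.measurable_restrict.aemeasurable hrest.aemeasurable
  rw [hcyl, ← MeasurableEquiv.map_apply, hψ, prod_prod, map_apply hrest .univ,
    Set.preimage_univ, measure_univ, mul_one]

variable {X₀ : Type*} [MeasurableSpace X₀] (μ₀ : Measure X₀) [IsProbabilityMeasure μ₀]

theorem pi_bool_setOf_eq_lt_one {E : Set X₀} (hE : MeasurableSet E) (h0 : 0 < μ₀ E)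
    (h1 : μ₀ E < 1) :
    Measure.pi (fun _ : Bool => μ₀) {z | z true = z false} < 1 := by
  set B : Set (Bool → X₀) := Set.univ.pi fun b => bif b then E else Eᶜ
  have hB : MeasurableSet B := .univ_pi fun b => by cases b; exacts [hE.compl, hE]
  have hdiag : {z : Bool → X₀ | z true = z false} ⊆ Bᶜ := fun z hz hzB =>
    hzB false trivial (hz ▸ hzB true trivial)
  have hBpos : Measure.pi (fun _ : Bool => μ₀) B ≠ 0 := by
    rw [pi_pi, Fintype.prod_bool, cond_true, cond_false, prob_compl_eq_one_sub hE]
    exact mul_ne_zero h0.ne' (tsub_pos_of_lt h1).ne'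
  calc Measure.pi (fun _ : Bool => μ₀) {z | z true = z false}
      ≤ Measure.pi (fun _ : Bool => μ₀) Bᶜ := measure_mono hdiag
    _ = 1 - Measure.pi (fun _ : Bool => μ₀) B := prob_compl_eq_one_sub hB
    _ < 1 := ENNReal.sub_lt_self ENNReal.one_ne_top one_ne_zero hBpos

theorem infinitePi_setOf_forall_eq_le {ι κ : Type*} [Fintype κ] {e : κ × Bool → ι}
    (he : Function.Injective e) :
    infinitePi (fun _ : ι => μ₀) {x | ∀ k, x (e (k, true)) = x (e (k, false))} ≤
      Measure.pi (fun _ : Bool => μ₀) {z | z true = z false} ^ Fintype.card κ := by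
  set Φ : (ι → X₀) → κ → Bool → X₀ :=
    MeasurableEquiv.curry κ Bool X₀ ∘ fun x p => x (e p)
  have hΦ : Measurable Φ := (MeasurableEquiv.measurable _).comp (by fun_prop)
  have hmap : (infinitePi fun _ : ι => μ₀).map Φ =
      Measure.pi fun _ : κ => Measure.pi fun _ : Bool => μ₀ := by
    rw [← map_map (MeasurableEquiv.measurable _) (by fun_prop),
      map_infinitePi_infinitePi_of_inj he, infinitePi_map_curry (fun _ _ => μ₀)]
    simp_rw [infinitePi_eq_pi]
  calc infinitePi (fun _ : ι => μ₀) {x | ∀ k, x (e (k, true)) = x (e (k, false))}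
      = infinitePi (fun _ : ι => μ₀)
          (Φ ⁻¹' Set.univ.pi fun _ => {z | z true = z false}) := by
        congr 1; ext x; simp [Φ]
    _ ≤ (infinitePi fun _ : ι => μ₀).map Φ (Set.univ.pi fun _ => {z | z true = z false}) :=
        le_map_apply hΦ.aemeasurable _
    _ = _ := by rw [hmap, pi_pi, Finset.prod_const, Finset.card_univ]

end MeasureTheory.Measure

section BernoulliAction

variable {Γ I : Type*} [Group Γ] [MulAction Γ I]

theorem exists_finset_card_eq_forall_smul_notMem {g : Γ} (hg : {i : I | g • i ≠ i}.Infinite)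
    (K : ℕ) : ∃ F : Finset I, F.card = K ∧ ∀ i ∈ F, g • i ∉ F := by
  classical
  induction K with
  | zero => exact ⟨∅, rfl, by simp⟩
  | succ K ih =>
    obtain ⟨F, hcard, hF⟩ := ih
    have hbad : ((F : Set I) ∪ (g • ·) ⁻¹' F ∪ (g⁻¹ • ·) ⁻¹' F).Finite :=
      (F.finite_toSet.union (F.finite_toSet.preimage (MulAction.injective g).injOn)).union
        (F.finite_toSet.preimage (MulAction.injective g⁻¹).injOn)
    obtain ⟨i, hmoved, hi⟩ := (hg.sdiff hbad).nonempty
    simp only [Set.mem_union, Set.mem_preimage, Finset.mem_coe, not_or] at hi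
    obtain ⟨⟨hiF, hgiF⟩, hginvF⟩ := hi
    refine ⟨insert i F, by rw [Finset.card_insert_of_notMem hiF, hcard], fun j hj => ?_⟩
    rw [Finset.mem_insert] at hj ⊢
    rcases hj with rfl | hj
    · exact not_or.2 ⟨hmoved, hgiF⟩
    · refine not_or.2 ⟨fun h => hginvF ?_, hF j hj⟩
      rwa [← h, inv_smul_smul]

theorem injective_cond_inv_smul {g : Γ} {F : Finset I} (hF : ∀ i ∈ F, g • i ∉ F) :
    Function.Injective fun p : F × Bool => bif p.2 then (p.1 : I) else g⁻¹ • (p.1 : I) := by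
  rintro ⟨i, _ | _⟩ ⟨j, _ | _⟩ h <;> simp only [cond_true, cond_false] at h
  · rw [smul_left_cancel_iff, Subtype.val_inj] at h; rw [h]
  · exact absurd (by rw [← h, smul_inv_smul]; exact i.2) (hF j j.2)
  · exact absurd (by rw [h, smul_inv_smul]; exact j.2) (hF i i.2)
  · rw [Subtype.val_inj] at h; rw [h]

variable {X₀ : Type*}

theorem cylinder_pi_singleton_subset_fixedPoints {g : Γ} (hfin : {i : I | g • i ≠ i}.Finite)
    (a : X₀) :
    cylinder hfin.toFinset (Set.univ.pi fun _ => ({a} : Set X₀)) ⊆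
      {x : I → X₀ | ∀ i, x (g⁻¹ • i) = x i} := by
  intro x hx i
  have hxa : ∀ j, g • j ≠ j → x j = a := fun j hj =>
    hx ⟨j, hfin.mem_toFinset.2 hj⟩ trivial
  by_cases hi : g⁻¹ • i = i
  · rw [hi]
  · rw [hxa _ (by rwa [smul_inv_smul, ne_comm]),
      hxa i fun h => hi (by rw [inv_smul_eq_iff, h])]

theorem infinitePi_fixedPoints_le [MeasurableSpace X₀] (μ₀ : Measure X₀)
    [IsProbabilityMeasure μ₀] {g : Γ} {F : Finset I} (hF : ∀ i ∈ F, g • i ∉ F) :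
    Measure.infinitePi (fun _ : I => μ₀) {x | ∀ i, x (g⁻¹ • i) = x i} ≤
      Measure.pi (fun _ : Bool => μ₀) {z | z true = z false} ^ F.card := by
  rw [← Fintype.card_coe F]
  exact (measure_mono fun x hx (k : F) => (hx k).symm).trans
    (Measure.infinitePi_setOf_forall_eq_le μ₀ (injective_cond_inv_smul hF))

end BernoulliAction

theorem generalized_bernoulli_essentially_free_iff_atomic_general
    {Γ : Type*} [Group Γ]
    {I : Type*} [MulAction Γ I]
    {X₀ : Type*} [MeasurableSpace X₀] (μ₀ : Measure X₀) [IsProbabilityMeasure μ₀]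
    (hatom : ∃ a : X₀, 0 < μ₀ {a})
    (htwopoints : ∀ a : X₀, μ₀ {a} < 1)
    (μ : Measure (I → X₀))
    (hμ : ∀ (s : Finset I) (A : I → Set X₀), (∀ i, MeasurableSet (A i)) →
      μ {x | ∀ i ∈ s, x i ∈ A i} = ∏ i ∈ s, μ₀ (A i)) :
    (∀ g : Γ, g ≠ 1 → μ {x : I → X₀ | ∀ i : I, x (g⁻¹ • i) = x i} = 0) ↔
    (∀ g : Γ, g ≠ 1 → {i : I | g • i ≠ i}.Infinite) := by
  obtain ⟨a, ha⟩ := hatom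
  obtain rfl : μ = Measure.infinitePi fun _ => μ₀ := Measure.eq_infinitePi _ hμ
  refine ⟨fun hfree g hg hfin => ?_, fun hmoved g hg => ?_⟩
  · have hcyl := (measure_mono (cylinder_pi_singleton_subset_fixedPoints hfin a)).trans_eq
      (hfree g hg)
    rw [Measure.infinitePi_cylinder', Measure.pi_pi, nonpos_iff_eq_zero,
      Finset.prod_eq_zero_iff] at hcyl
    obtain ⟨i, -, hi⟩ := hcyl
    exact ha.ne' hi
  · have hdiag := Measure.pi_bool_setOf_eq_lt_one μ₀ (measurableSet_toMeasurable μ₀ {a})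
      (by rwa [measure_toMeasurable]) (by rw [measure_toMeasurable]; exact htwopoints a)
    refine le_antisymm (ge_of_tendsto' (ENNReal.tendsto_pow_atTop_nhds_zero_of_lt_one hdiag)
      fun K => ?_) bot_le
    obtain ⟨F, rfl, hF⟩ := exists_finset_card_eq_forall_smul_notMem (hmoved g hg) K
    exact infinitePi_fixedPoints_le μ₀ hF

/-- For a countable group `Γ` acting on a countably infinite set `I` and a
base probability space `(X₀, μ₀)` having an atom and at least two points in its support,
the generalized Bernoulli action `Γ ↷ (X₀, μ₀)^I` is essentially free if and only if
every `g ≠ e` moves infinitely many elements of `I`. -/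
theorem generalized_bernoulli_essentially_free_iff_atomic
    {Γ : Type*} [Group Γ] [Countable Γ]
    {I : Type*} [Countable I] [Infinite I] [MulAction Γ I]
    {X₀ : Type*} [MeasurableSpace X₀] (μ₀ : Measure X₀) [IsProbabilityMeasure μ₀]
    (hatom : ∃ a : X₀, 0 < μ₀ {a})
    (htwopoints : ∀ a : X₀, μ₀ {a} < 1)
    (μ : Measure (I → X₀)) [IsProbabilityMeasure μ]
    (hμ : ∀ (s : Finset I) (A : I → Set X₀), (∀ i, MeasurableSet (A i)) →
      μ {x | ∀ i ∈ s, x i ∈ A i} = ∏ i ∈ s, μ₀ (A i)) :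
    (∀ g : Γ, g ≠ 1 → μ {x : I → X₀ | ∀ i : I, x (g⁻¹ • i) = x i} = 0) ↔
    (∀ g : Γ, g ≠ 1 → {i : I | g • i ≠ i}.Infinite) :=
  generalized_bernoulli_essentially_free_iff_atomic_general μ₀ hatom htwopoints μ hμ
end

section
/- Let Γ = Γ₁ * Γ₂ be the free product of two groups, let |g| denote the word length of g ∈ Γ with respect to this free product decomposition (the number of alternating syllables), and let 0 < ρ < 1. Then the function φ_ρ : Γ → ℂ defined by φ_ρ(g) = ρ^{|g|} is positive definite on Γ, i.e., for all finite families g₁, …, g_n ∈ Γ and c₁, …, c_n ∈ ℂ, one has ∑_{i,j} c̄_i c_j φ_ρ(g_i⁻¹ g_j) ≥ 0. -/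
/-!
Let the free product `Γ` act on its Bass–Serre tree, whose vertices are the elements of `Γ` and
the cosets `w Γ_i`, an element being adjacent to the cosets containing it. For a coset vertex `v`
and `x ∈ Γ`, let `gate v x ∈ v` be the neighbour of `v` on the geodesic towards `x`. The coset
vertices with `gate v x ≠ gate v y` are exactly those on the geodesic from `x` to `y`, and there
are `|x⁻¹ y|` of them. Hence `ρ ^ |x⁻¹ y| = ∏ᵥ (ρ + (1 - ρ) [gate v x = gate v y])` is a finite
product of positive semidefinite kernels, and the Schur product theorem applies.
-/

open scoped ComplexConjugate ComplexOrder

/-- The word length of an element of a free product: the number of alternating syllables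
in its unique reduced expression (and `0` for the identity). -/
noncomputable def freeProductWordLength {ι : Type*} {M : ι → Type*} [∀ i, Group (M i)]
    (g : Monoid.CoprodI M) : ℕ := by
  classical exact (Monoid.CoprodI.Word.equiv g).toList.length

open scoped Pointwise
open Finset

namespace Matrix

variable {𝕜 α Ω V : Type*} [RCLike 𝕜] {ρ : ℝ}

theorem posSemidef_ite_eq_one_zero [DecidableEq Ω] (f : α → Ω) :
    (of fun a b => if f a = f b then (1 : 𝕜) else 0).PosSemidef := by
  convert (PosSemidef.one (R := 𝕜) (n := Ω)).submatrix f using 1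
  ext a b
  simp [one_apply]

theorem posSemidef_ite_eq_one_ofReal [DecidableEq Ω] (f : α → Ω) (h₀ : 0 ≤ ρ)
    (h₁ : ρ ≤ 1) :
    (of fun a b => if f a = f b then 1 else (ρ : 𝕜)).PosSemidef := by
  have hρ : (0 : 𝕜) ≤ ρ := RCLike.ofReal_nonneg.mpr h₀
  have hρ' : (0 : 𝕜) ≤ 1 - ρ := by
    simpa using RCLike.ofReal_nonneg (K := 𝕜) |>.mpr (sub_nonneg.mpr h₁)
  convert ((posSemidef_ite_eq_one_zero (𝕜 := 𝕜) fun _ : α => ()).smul hρ).add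
    ((posSemidef_ite_eq_one_zero (𝕜 := 𝕜) f).smul hρ') using 1
  ext a b
  by_cases h : f a = f b <;> simp [h, RCLike.real_smul_eq_coe_mul]

theorem posSemidef_pow_card_filter_ne [DecidableEq Ω] (p : V → α → Ω) (S : Finset V)
    (h₀ : 0 ≤ ρ) (h₁ : ρ ≤ 1) :
    (of fun a b => (ρ : 𝕜) ^ #{v ∈ S | p v a ≠ p v b}).PosSemidef := by
  classical
  induction S using Finset.induction_on with
  | empty => simpa using posSemidef_ite_eq_one_zero (𝕜 := 𝕜) fun _ : α => ()
  | insert v S hv ih =>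
    convert (posSemidef_ite_eq_one_ofReal (𝕜 := 𝕜) (p v) h₀ h₁).hadamard ih using 1
    ext a b
    by_cases h : p v a = p v b
    · simp [filter_insert, h]
    · rw [of_apply, filter_insert, if_pos h, card_insert_of_notMem (by simp [hv]), pow_succ']
      simp [h]

theorem posSemidef_pow_ncard_setOf_ne [Finite α] (p : V → α → Ω)
    (hp : ∀ a b, {v | p v a ≠ p v b}.Finite) (h₀ : 0 ≤ ρ) (h₁ : ρ ≤ 1) :
    (of fun a b => (ρ : 𝕜) ^ {v | p v a ≠ p v b}.ncard).PosSemidef := by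
  classical
  have hS : (⋃ a, ⋃ b, {v | p v a ≠ p v b}).Finite :=
    Set.finite_iUnion fun a => Set.finite_iUnion fun b => hp a b
  convert posSemidef_pow_card_filter_ne (𝕜 := 𝕜) p hS.toFinset h₀ h₁ using 1
  ext a b
  rw [of_apply, of_apply, ← Set.ncard_coe_finset]
  congr 2
  ext v
  simp only [Set.mem_ofPred_eq, coe_filter, Set.Finite.mem_toFinset, Set.mem_iUnion]
  exact ⟨fun h => ⟨⟨a, b, h⟩, h⟩, And.right⟩

end Matrix

namespace Monoid.CoprodI

variable {ι : Type*} {G : ι → Type*} [∀ i, Group (G i)] [DecidableEq ι] [∀ i, DecidableEq (G i)]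

theorem Word.equiv_mul (x y : CoprodI G) : Word.equiv (x * y) = x • Word.equiv y :=
  mul_smul x y (Word.empty : Word G)

theorem Word.equiv_one : Word.equiv (1 : CoprodI G) = Word.empty :=
  one_smul (CoprodI G) (Word.empty : Word G)

theorem Word.equiv_prod (w : Word G) : Word.equiv w.prod = w :=
  Word.equiv.apply_symm_apply w

/-- The leading syllable of `x` if it lies in `G i`, and `1` otherwise. -/
def head (i : ι) (x : CoprodI G) : G i :=
  (Word.equivPair i (Word.equiv x)).head

theorem head_of_mul {i : ι} (m : G i) (x : CoprodI G) : head i (of m * x) = m * head i x := by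
  rw [head, head, Word.equiv_mul, Word.equivPair_smul_same]

theorem head_prod_of_fstIdx_ne {i : ι} {w : Word G} (hw : w.fstIdx ≠ some i) :
    head i w.prod = 1 := by
  rw [head, Word.equiv_prod, Word.equivPair_eq_of_fstIdx_ne hw]

theorem head_one (i : ι) : head i (1 : CoprodI G) = 1 := by
  simpa using head_prod_of_fstIdx_ne (i := i) (w := Word.empty)
    (by simp [Word.fstIdx, Word.empty])

theorem head_of {i : ι} (m : G i) : head i (of m) = m := by
  simpa [head_one] using head_of_mul m 1

theorem fstIdx_ne_of_head_eq_one {i : ι} {x : CoprodI G} (hx : head i x = 1) :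
    (Word.equiv x).fstIdx ≠ some i := by
  have h := (Word.equivPair i).symm_apply_apply (Word.equiv x)
  rw [head] at hx
  rw [Word.equivPair_symm, Word.rcons, dif_pos hx] at h
  exact h ▸ (Word.equivPair i _).fstIdx_ne

theorem Word.equiv_of_mul {i : ι} {m : G i} (hm : m ≠ 1) {x : CoprodI G} (hx : head i x = 1) :
    Word.equiv (of m * x) = Word.cons m (Word.equiv x) (fstIdx_ne_of_head_eq_one hx) hm := by
  rw [Word.equiv_mul, Word.of_smul_def,
    Word.equivPair_eq_of_fstIdx_ne (fstIdx_ne_of_head_eq_one hx), Word.rcons, mul_one, dif_neg hm]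

theorem head_of_mul_of_ne {i k : ι} (hki : k ≠ i) {m : G k} (hm : m ≠ 1) {x : CoprodI G}
    (hx : head k x = 1) : head i (of m * x) = 1 := by
  rw [head, Word.equiv_of_mul hm hx, Word.equivPair_eq_of_fstIdx_ne (by simpa using hki)]

theorem head_of_of_ne {i j : ι} (hji : j ≠ i) (b : G j) : head i (of b) = 1 := by
  by_cases hb : b = 1
  · rw [hb, map_one, head_one]
  · simpa using head_of_mul_of_ne hji hb (head_one j)

theorem eq_one_of_mem_range_of_head_eq_one {i : ι} {x : CoprodI G}
    (hx : x ∈ (of : G i →* CoprodI G).range) (h : head i x = 1) : x = 1 := by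
  obtain ⟨b, rfl⟩ := hx
  rw [← head_of b, h, map_one]

theorem freeProductWordLength_eq (x : CoprodI G) :
    freeProductWordLength x = (Word.equiv x).toList.length := by
  unfold freeProductWordLength
  congr!

theorem freeProductWordLength_of_mul {i : ι} {m : G i} (hm : m ≠ 1) {x : CoprodI G}
    (hx : head i x = 1) : freeProductWordLength (of m * x) = freeProductWordLength x + 1 := by
  simp [freeProductWordLength_eq, Word.equiv_of_mul hm hx]

@[elab_as_elim]
theorem induction_on_reduced {motive : CoprodI G → Prop} (x : CoprodI G) (one : motive 1)
    (of_mul : ∀ {i} (m : G i) (x : CoprodI G), m ≠ 1 → head i x = 1 → motive x →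
      motive (of m * x)) : motive x := by
  rw [← Word.equiv.symm_apply_apply x]
  induction Word.equiv x using Word.consRecOn with
  | empty => exact one
  | cons i m w hw hm ih =>
    show motive (Word.cons m w hw hm).prod
    rw [Word.prod_cons]
    exact of_mul m _ hm (head_prod_of_fstIdx_ne hw) ih

theorem head_mul_of {j : ι} (s : G j) (u : CoprodI G) {i : ι}
    (h : ¬(i = j ∧ u ∈ (of : G j →* CoprodI G).range)) : head i (u * of s) = head i u := by
  induction u using induction_on_reduced generalizing i with
  | one =>
    have hij : i ≠ j := fun hij => h ⟨hij, one_mem _⟩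
    rw [one_mul, head_of_of_ne hij.symm, head_one]
  | @of_mul k m x hm hx ih =>
    by_cases hik : i = k
    · subst hik
      rw [mul_assoc, head_of_mul, head_of_mul, ih]
      rintro ⟨rfl, hr⟩
      rw [eq_one_of_mem_range_of_head_eq_one hr hx, mul_one] at h
      exact h ⟨rfl, m, rfl⟩
    · rw [head_of_mul_of_ne (Ne.symm hik) hm hx, mul_assoc]
      by_cases hr : k = j ∧ x ∈ (of : G j →* CoprodI G).range
      · obtain ⟨rfl, hr⟩ := hr
        rw [eq_one_of_mem_range_of_head_eq_one hr hx, one_mul, ← map_mul,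
          head_of_of_ne (Ne.symm hik)]
      · exact head_of_mul_of_ne (Ne.symm hik) hm ((ih hr).trans hx)

variable (G) in
/-- The vertices of the Bass–Serre tree of the free product other than the group elements:
the left cosets `w G_i` of the factors. -/
abbrev Vertex : Type _ := Σ i, CoprodI G ⧸ (of : G i →* CoprodI G).range

variable (G) in
def baseVertex (i : ι) : Vertex G := ⟨i, (1 : CoprodI G)⟩

/-- The vertex `w G_i` is adjacent to the elements of its coset; `gate v x` is the one through
which the geodesic from `v` to `x` passes. -/
def gate (v : Vertex G) (x : CoprodI G) : CoprodI G :=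
  v.2.liftOn' (fun w => w * of (head v.1 (w⁻¹ * x))) fun w w' hw => by
    obtain ⟨b, hb⟩ := QuotientGroup.leftRel_apply.mp hw
    obtain rfl : w' = w * of b := by rw [hb, mul_inv_cancel_left]
    rw [mul_inv_rev, ← map_inv, mul_assoc (of b⁻¹), head_of_mul, map_mul, map_inv]
    group

theorem gate_mk (i : ι) (w x : CoprodI G) :
    gate ⟨i, (w : CoprodI G ⧸ (of : G i →* CoprodI G).range)⟩ x =
      w * of (head i (w⁻¹ * x)) :=
  rfl

theorem gate_baseVertex (i : ι) (x : CoprodI G) : gate (baseVertex G i) x = of (head i x) := by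
  rw [baseVertex, gate_mk, inv_one, one_mul, one_mul]

theorem gate_smul (g x : CoprodI G) (v : Vertex G) : gate (g • v) (g * x) = g * gate v x := by
  obtain ⟨i, w⟩ := v
  induction w using QuotientGroup.induction_on with
  | H w =>
    rw [Sigma.smul_mk, MulAction.Quotient.smul_mk, gate_mk, gate_mk, smul_eq_mul, mul_inv_rev,
      mul_assoc w⁻¹, inv_mul_cancel_left, mul_assoc]

theorem gate_of_eq_gate_one {j : ι} (s : G j) {v : Vertex G} (hv : v ≠ baseVertex G j) :
    gate v (of s) = gate v 1 := by
  obtain ⟨i, w⟩ := v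
  induction w using QuotientGroup.induction_on with
  | H w =>
    rw [gate_mk, gate_mk, mul_one, head_mul_of]
    rintro ⟨rfl, hw⟩
    exact hv (congrArg _ (QuotientGroup.eq.mpr (by simpa using hw)))

theorem smul_setOf_gate_ne (g x y : CoprodI G) :
    g • {v : Vertex G | gate v x ≠ gate v y} = {v | gate v (g * x) ≠ gate v (g * y)} := by
  ext v
  rw [Set.mem_smul_set_iff_inv_smul_mem, Set.mem_ofPred_eq, Set.mem_ofPred_eq,
    ← smul_inv_smul g v, gate_smul, gate_smul, inv_smul_smul, ne_eq, ne_eq, mul_right_inj]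

theorem encard_setOf_gate_one_ne (z : CoprodI G) :
    {v : Vertex G | gate v 1 ≠ gate v z}.encard = freeProductWordLength z := by
  induction z using induction_on_reduced with
  | one => simp [freeProductWordLength_eq, Word.equiv_one]
  | @of_mul i m t hm ht ih =>
    -- Translating by `(of m)⁻¹` turns the path from `1` to `of m * t` into the path from
    -- `of m⁻¹` to `t`, which is the path from `1` to `t` preceded by the vertex `G_i`.
    have hsep : {v | gate v (of m⁻¹) ≠ gate v t} =
        insert (baseVertex G i) {v | gate v 1 ≠ gate v t} := by
      ext v
      rw [Set.mem_insert_iff, Set.mem_ofPred_eq, Set.mem_ofPred_eq]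
      by_cases hv : v = baseVertex G i
      · simp only [hv, gate_baseVertex, head_of, ht, true_or, iff_true]
        exact (of_injective i).ne (inv_ne_one.mpr hm)
      · rw [gate_of_eq_gate_one _ hv]
        simp [hv]
    have hbase : baseVertex G i ∉ {v | gate v 1 ≠ gate v t} := by
      simp [gate_baseVertex, head_one, ht]
    rw [← mul_inv_cancel (of m), ← smul_setOf_gate_ne, Set.encard_smul_set, ← map_inv, hsep,
      Set.encard_insert_of_notMem hbase, ih, freeProductWordLength_of_mul hm ht, Nat.cast_succ]

theorem encard_setOf_gate_ne (x y : CoprodI G) :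
    {v : Vertex G | gate v x ≠ gate v y}.encard = freeProductWordLength (x⁻¹ * y) := by
  rw [← encard_setOf_gate_one_ne]
  conv_rhs => rw [← Set.encard_smul_set x, smul_setOf_gate_ne, mul_one, mul_inv_cancel_left]

theorem ncard_setOf_gate_ne (x y : CoprodI G) :
    {v : Vertex G | gate v x ≠ gate v y}.ncard = freeProductWordLength (x⁻¹ * y) := by
  rw [Set.ncard_def, encard_setOf_gate_ne, ENat.toNat_natCast]

theorem finite_setOf_gate_ne (x y : CoprodI G) : {v : Vertex G | gate v x ≠ gate v y}.Finite :=
  Set.finite_of_encard_eq_coe (encard_setOf_gate_ne x y)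

end Monoid.CoprodI

/-- For a free product `Γ = Γ₁ * Γ₂` (formalized here as the free product of a
`Bool`-indexed family of two groups) and `0 < ρ < 1`, the function `φ_ρ(g) = ρ^{|g|}` is
positive definite: for all `g₁, …, g_n ∈ Γ` and `c₁, …, c_n ∈ ℂ`,
`∑_{i,j} conj(c i) * c j * ρ^{|g i⁻¹ * g j|} ≥ 0`. -/
theorem freeProduct_wordLength_posDef
    {M : Bool → Type*} [∀ i, Group (M i)]
    (ρ : ℝ) (hρ₀ : 0 < ρ) (hρ₁ : ρ < 1)
    (n : ℕ) (g : Fin n → Monoid.CoprodI M) (c : Fin n → ℂ) :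
    0 ≤ ∑ i, ∑ j, conj (c i) * c j *
      ((ρ : ℂ) ^ freeProductWordLength ((g i)⁻¹ * g j)) := by
  classical
  have hK := Matrix.posSemidef_pow_ncard_setOf_ne (𝕜 := ℂ)
    (fun (v : Monoid.CoprodI.Vertex M) k => Monoid.CoprodI.gate v (g k))
    (fun i j => Monoid.CoprodI.finite_setOf_gate_ne (g i) (g j)) hρ₀.le hρ₁.le
  convert hK.dotProduct_mulVec_nonneg c using 1
  simp only [dotProduct, Matrix.mulVec, Matrix.of_apply, Monoid.CoprodI.ncard_setOf_gate_ne,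
    mul_sum, Pi.star_apply, RCLike.star_def, RCLike.ofReal_eq_complex_ofReal]
  refine sum_congr rfl fun i _ => sum_congr rfl fun j _ => ?_
  ring
end

section
/- Let Γ = ℤⁿ ⋊ SL(n,ℤ) with n ≥ 2 and let Σ = ℤⁿ ⊴ Γ. Then for every g ∈ Γ ∖ Σ the set {sgs⁻¹ : s ∈ Σ} is infinite (i.e. Σ ⊴ Γ has the relative icc property). -/
open Matrix

/-- Relative icc property of `ℤⁿ` in `Γ = ℤⁿ ⋊ SL(n,ℤ)` for `n ≥ 2`:
for every `g ∈ Γ ∖ ℤⁿ`, the set `{s g s⁻¹ : s ∈ ℤⁿ}` is infinite.  The semidirect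
product is formed with respect to any action homomorphism `φ` implementing the matrix
action of `SL(n,ℤ)` on `ℤⁿ`, and `g ∉ Σ = ℤⁿ` means that the `SL(n,ℤ)`-component of `g`
is non-trivial. -/
theorem relative_icc_int_semidirect_SL
    (n : ℕ) (hn : 2 ≤ n)
    (φ : Matrix.SpecialLinearGroup (Fin n) ℤ →* MulAut (Multiplicative (Fin n → ℤ)))
    (hφ : ∀ (A : Matrix.SpecialLinearGroup (Fin n) ℤ) (v : Fin n → ℤ),
      (φ A (Multiplicative.ofAdd v)).toAdd = (A : Matrix (Fin n) (Fin n) ℤ).mulVec v)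
    (g : SemidirectProduct (Multiplicative (Fin n → ℤ))
          (Matrix.SpecialLinearGroup (Fin n) ℤ) φ)
    (hg : g.right ≠ 1) :
    {x | ∃ s : Multiplicative (Fin n → ℤ),
      SemidirectProduct.inl s * g * (SemidirectProduct.inl s)⁻¹ = x}.Infinite := by
  set A := g.right with hA
  -- find a vector not fixed by A
  obtain ⟨i, j, hij⟩ : ∃ i j, (A : Matrix (Fin n) (Fin n) ℤ) i j ≠ (1 : Matrix (Fin n) (Fin n) ℤ) i j := by
    by_contra h
    push_neg at h
    exact hg (Subtype.ext (by ext i j; exact h i j))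
  set w : Fin n → ℤ := Pi.single j 1 with hwdef
  have hw : (A : Matrix (Fin n) (Fin n) ℤ).mulVec w ≠ w := by
    intro h
    apply hij
    have := congrFun h i
    simpa [hwdef, Matrix.mulVec_single, Matrix.one_apply, Pi.single_apply, eq_comm] using this
  have hd : w - (A : Matrix (Fin n) (Fin n) ℤ).mulVec w ≠ 0 := sub_ne_zero.mpr (Ne.symm hw)
  -- left component of the conjugate by k • w
  have hleft : ∀ k : ℤ,
      ((SemidirectProduct.inl (G := Matrix.SpecialLinearGroup (Fin n) ℤ) (φ := φ)
          (Multiplicative.ofAdd (k • w)) * g *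
        (SemidirectProduct.inl (Multiplicative.ofAdd (k • w)))⁻¹).left).toAdd
      = k • w + g.left.toAdd + (A : Matrix (Fin n) (Fin n) ℤ).mulVec (-(k • w)) := by
    intro k
    have h1 : ((SemidirectProduct.inl (G := Matrix.SpecialLinearGroup (Fin n) ℤ) (φ := φ)
          (Multiplicative.ofAdd (k • w)) * g *
        (SemidirectProduct.inl (Multiplicative.ofAdd (k • w)))⁻¹).left)
        = Multiplicative.ofAdd (k • w) * g.left *
            (φ g.right (Multiplicative.ofAdd (-(k • w)))) := by
      simp [SemidirectProduct.mul_left, mul_assoc]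
    rw [h1]
    have h2 := hφ g.right (-(k • w))
    simp only [toAdd_mul]
    rw [h2]
    rfl
  apply Set.infinite_of_injective_forall_mem
    (f := fun k : ℤ =>
      SemidirectProduct.inl (G := Matrix.SpecialLinearGroup (Fin n) ℤ) (φ := φ)
        (Multiplicative.ofAdd (k • w)) * g *
      (SemidirectProduct.inl (Multiplicative.ofAdd (k • w)))⁻¹)
  · intro k1 k2 h
    have := congrArg (fun x => (SemidirectProduct.left x).toAdd) h
    simp only at this
    rw [hleft k1, hleft k2] at this
    have hk : k1 • (w - (A : Matrix (Fin n) (Fin n) ℤ).mulVec w)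
        = k2 • (w - (A : Matrix (Fin n) (Fin n) ℤ).mulVec w) := by
      have e : ∀ k : ℤ, (A : Matrix (Fin n) (Fin n) ℤ).mulVec (-(k • w))
          = -(k • (A : Matrix (Fin n) (Fin n) ℤ).mulVec w) := by
        intro k
        rw [Matrix.mulVec_neg, Matrix.mulVec_smul]
      rw [e k1, e k2] at this
      simp only [smul_sub]
      abel_nf
      abel_nf at this
      linear_combination (norm := abel) this
    exact smul_left_injective ℤ hd hk
  · intro k
    exact ⟨Multiplicative.ofAdd (k • w), rfl⟩
end

section
/- Let ν be a σ-finite Borel measure on ℝ and let ν̃ be the measure with dν̃(x) = e^{−x} dν(x). Let λ be Lebesgue measure on ℝ and set (Y, η) = (ℝ², λ × ν̃). Let Λ = R ⋊ Q act on Y by (r, q) · (x, y) = (r + e^q x, q + y), where Q ⊆ H_ν = {x : ν translated by x equals ν}. Then this action preserves the measure η. -/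
/-!
The map is a product `f × g` of an affine map of `ℝ` and a translation. The affine map
`x ↦ r + e^q x` scales Lebesgue measure by `e^{-q}`. Since translation by `q` preserves `ν`,
it carries the density `e^{-x}` to `e^{-(x-q)} = e^q e^{-x}`, so it scales `ν̃` by `e^q`.
The two factors cancel in the product.
-/

open MeasureTheory Measure ENNReal

theorem MeasurableEquiv.map_withDensity {α β : Type*} [MeasurableSpace α] [MeasurableSpace β]
    (e : α ≃ᵐ β) (μ : Measure α) (f : α → ℝ≥0∞) :
    (μ.withDensity f).map e = (μ.map e).withDensity (f ∘ e.symm) := by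
  ext s hs
  rw [map_apply e.measurable hs, withDensity_apply _ (e.measurable hs), withDensity_apply _ hs,
    e.restrict_map, lintegral_map_equiv]
  simp only [Function.comp_apply, MeasurableEquiv.symm_apply_apply]

theorem Real.map_volume_const_add_mul (r : ℝ) {a : ℝ} (ha : a ≠ 0) :
    volume.map (fun x : ℝ => r + a * x) = ENNReal.ofReal |a⁻¹| • volume := by
  change volume.map ((r + ·) ∘ (a * ·)) = _
  rw [← map_map (measurable_const_add r) (measurable_const_mul a), Real.map_volume_mul_left ha,
    Measure.map_smul, map_add_left_eq_self]

theorem map_const_add_withDensity_exp_neg (ν : Measure ℝ) (q : ℝ) (hq : ν.map (· + q) = ν) :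
    (ν.withDensity fun x => ENNReal.ofReal (Real.exp (-x))).map (q + ·)
      = ENNReal.ofReal (Real.exp q) • ν.withDensity fun x => ENNReal.ofReal (Real.exp (-x)) := by
  have hq' : ν.map (q + ·) = ν := by simpa only [add_comm q] using hq
  rw [← MeasurableEquiv.coe_addLeft, MeasurableEquiv.map_withDensity, MeasurableEquiv.coe_addLeft,
    hq', ← withDensity_smul' _ _ ofReal_ne_top]
  congr 1
  funext x
  simp only [Function.comp_apply, MeasurableEquiv.symm_addLeft, MeasurableEquiv.coe_addLeft,
    Pi.smul_apply, smul_eq_mul]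
  rw [← ofReal_mul (Real.exp_pos q).le, ← Real.exp_add]
  ring_nf

/-- Let `ν` be a σ-finite Borel measure on `ℝ`, `ν̃` the measure with
`dν̃(x) = e^{−x} dν(x)`, `λ` Lebesgue measure, and `η = λ × ν̃` on `ℝ²`.  For `r ∈ ℝ` and
`q` in `H_ν` (i.e. translation by `q` preserves `ν`), the transformation
`(x, y) ↦ (r + e^q x, q + y)` preserves the measure `η`.  (These are exactly the
transformations defining the action of `Λ = R ⋊ Q`, `Q ⊆ H_ν`, on `(Y, η) = (ℝ², λ × ν̃)`.) -/
theorem affine_action_preserves_product_measure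
    (ν : Measure ℝ) [SigmaFinite ν]
    (r q : ℝ) (hq : Measure.map (fun y => y + q) ν = ν) :
    MeasurePreserving (fun p : ℝ × ℝ => (r + Real.exp q * p.1, q + p.2))
      ((volume : Measure ℝ).prod (ν.withDensity fun x => ENNReal.ofReal (Real.exp (-x))))
      ((volume : Measure ℝ).prod (ν.withDensity fun x => ENNReal.ofReal (Real.exp (-x)))) := by
  have hscale : ENNReal.ofReal |(Real.exp q)⁻¹| * ENNReal.ofReal (Real.exp q) = 1 := by
    rw [← ofReal_mul (abs_nonneg _), abs_of_pos (inv_pos.2 (Real.exp_pos q)),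
      inv_mul_cancel₀ (Real.exp_ne_zero q), ofReal_one]
  refine ⟨by fun_prop, ?_⟩
  change map (Prod.map (fun x : ℝ => r + Real.exp q * x) (q + ·)) _ = _
  rw [← map_prod_map _ _ (by fun_prop) (measurable_const_add q),
    Real.map_volume_const_add_mul r (Real.exp_ne_zero q), map_const_add_withDensity_exp_neg ν q hq,
    prod_smul_left, prod_smul_right, smul_smul, hscale, one_smul]
end
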